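/- For every natural number n ≥ 2, φ(n)⁴ + ψ(n)⁴ + σ(n)⁴ ≥ 3n⁴ + 4n³ + 18n² + 4n + 3. -/

import Mathlib

/-- The Dedekind psi function: ψ(p^a) = p^(a-1)(p+1), ψ(1) = 1, multiplicative. -/
def dpsi (n : ℕ) : ℕ := ∏ p ∈ n.primeFactors, p ^ (n.factorization p - 1) * (p + 1)

/-- Sum of divisors function. -/
def sigma1 (n : ℕ) : ℕ := ArithmeticFunction.sigma 1 n

/-!
Write `n = X ∏ p`, `φ(n) = X ∏ (p - 1)` and `ψ(n) = X ∏ (p + 1)` with `X = ∏ p ^ (vₚ(n) - 1)`,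
the products running over the prime factors of `n`. Expanding the products gives
`φ(n) + ψ(n) ≥ 2n` and `ψ(n) ≥ n + 1`, while `σ(n) ≥ n + 1`. Since
`3n⁴ + 4n³ + 18n² + 4n + 3 = (n - 1)⁴ + 2 (n + 1)⁴`, it remains to see that
`a⁴ + b⁴ ≥ (n - 1)⁴ + (n + 1)⁴` when `a + b ≥ 2n` and `b ≥ n + 1`, which follows from the
convexity of `t ↦ t⁴`.
-/

namespace Finset

variable {ι : Type*} (s : Finset ι) (f : ι → ℕ)

theorem two_mul_prod_le_prod_sub_one_add_prod_add_one :
    2 * ∏ i ∈ s, f i ≤ ∏ i ∈ s, (f i - 1) + ∏ i ∈ s, (f i + 1) := by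
  classical
  induction s using Finset.induction_on with
  | empty => simp
  | @insert j s hj ih =>
    rw [prod_insert hj, prod_insert hj, prod_insert hj]
    have hAB : ∏ i ∈ s, (f i - 1) ≤ ∏ i ∈ s, (f i + 1) :=
      prod_le_prod' fun i _ => by omega
    rcases Nat.eq_zero_or_pos (f j) with h0 | hpos
    · simp [h0]
    · -- `(x - 1) A + (x + 1) B = x (A + B) + (B - A)` for `x ≥ 1`, `A ≤ B`
      calc 2 * (f j * ∏ i ∈ s, f i) = f j * (2 * ∏ i ∈ s, f i) := by ring
        _ ≤ f j * (∏ i ∈ s, (f i - 1) + ∏ i ∈ s, (f i + 1)) := Nat.mul_le_mul_left _ ih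
        _ ≤ (f j - 1) * ∏ i ∈ s, (f i - 1) + (f j + 1) * ∏ i ∈ s, (f i + 1) := by
          zify [hAB, hpos]; nlinarith

theorem prod_lt_prod_add_one (hs : s.Nonempty) :
    ∏ i ∈ s, f i < ∏ i ∈ s, (f i + 1) := by
  induction hs using Finset.Nonempty.cons_induction with
  | singleton j => simp
  | cons j s hj _ ih =>
    rw [prod_cons, prod_cons]
    calc f j * ∏ i ∈ s, f i ≤ f j * ∏ i ∈ s, (f i + 1) := Nat.mul_le_mul_left _ ih.le
      _ < (f j + 1) * ∏ i ∈ s, (f i + 1) :=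
        Nat.mul_lt_mul_of_pos_right (Nat.lt_succ_self _) (Nat.zero_lt_of_lt ih)

end Finset

namespace Nat

theorem prod_primeFactors_pow_pred_mul_self {n : ℕ} (hn : n ≠ 0) :
    ∏ p ∈ n.primeFactors, p ^ (n.factorization p - 1) * p = n := by
  conv_rhs => rw [prod_primeFactors_pow_factorization hn]
  refine Finset.prod_congr rfl fun p hp => ?_
  rw [← pow_succ, Nat.sub_add_cancel]
  exact (prime_of_mem_primeFactors hp).factorization_pos_of_dvd hn (dvd_of_mem_primeFactors hp)

theorem lt_sigma_one_apply {n : ℕ} (hn : 1 < n) : n < ArithmeticFunction.sigma 1 n := by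
  rw [ArithmeticFunction.sigma_one_apply, sum_divisors_eq_sum_properDivisors_add_self]
  have := Finset.single_le_sum (fun d _ => Nat.zero_le d) (one_mem_properDivisors_iff_one_lt.2 hn)
  omega

theorem totient_eq_mul_prod_sub_one {n : ℕ} (hn : n ≠ 0) :
    n.totient = (∏ p ∈ n.primeFactors, p ^ (n.factorization p - 1)) *
      ∏ p ∈ n.primeFactors, (p - 1) := by
  rw [totient_eq_prod_factorization hn, Finsupp.prod, support_factorization,
    ← Finset.prod_mul_distrib]

end Nat

theorem dpsi_eq_mul_prod_add_one (n : ℕ) :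
    dpsi n = (∏ p ∈ n.primeFactors, p ^ (n.factorization p - 1)) *
      ∏ p ∈ n.primeFactors, (p + 1) := by
  rw [dpsi, Finset.prod_mul_distrib]

theorem two_mul_le_totient_add_dpsi (n : ℕ) : 2 * n ≤ n.totient + dpsi n := by
  rcases eq_or_ne n 0 with rfl | hn
  · simp
  conv_lhs => rw [← Nat.prod_primeFactors_pow_pred_mul_self hn]
  rw [Nat.totient_eq_mul_prod_sub_one hn, dpsi_eq_mul_prod_add_one, Finset.prod_mul_distrib,
    mul_left_comm, ← mul_add]
  exact Nat.mul_le_mul_left _ (Finset.two_mul_prod_le_prod_sub_one_add_prod_add_one _ _)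

theorem lt_dpsi {n : ℕ} (hn : n ≠ 1) : n < dpsi n := by
  rcases eq_or_ne n 0 with rfl | hn0
  · simp [dpsi]
  conv_lhs => rw [← Nat.prod_primeFactors_pow_pred_mul_self hn0]
  rw [dpsi_eq_mul_prod_add_one, Finset.prod_mul_distrib]
  refine Nat.mul_lt_mul_of_pos_left (Finset.prod_lt_prod_add_one _ _ ?_) ?_
  · exact Nat.nonempty_primeFactors.2 (by omega)
  · exact Finset.prod_pos fun p hp => pow_pos (Nat.prime_of_mem_primeFactors hp).pos _

theorem sub_one_pow_four_add_add_one_pow_four_le {a b m : ℤ} (hm : 1 ≤ m) (ha : 0 ≤ a)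
    (hab : 2 * m ≤ a + b) (hb : m + 1 ≤ b) :
    (m - 1) ^ 4 + (m + 1) ^ 4 ≤ a ^ 4 + b ^ 4 := by
  rcases le_or_gt (m - 1) a with h | h
  · gcongr
  · have hb4 : (2 * m - a) ^ 4 ≤ b ^ 4 := pow_le_pow_left₀ (by omega) (by omega) 4
    have hd : 0 ≤ m - 1 - a := by omega
    -- with `d = m - 1 - a`: `a⁴ + (2m - a)⁴ - (m - 1)⁴ - (m + 1)⁴`
    -- `= 8d(3m² + 1) + 12d²(m² + 1) + 8d³ + 2d⁴`
    nlinarith [mul_nonneg hd hd, pow_nonneg hd 3, pow_nonneg hd 4,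
      mul_nonneg hd (by omega : (0 : ℤ) ≤ m)]

theorem stmt1 (n : ℕ) (hn : 2 ≤ n) :
    n.totient ^ 4 + dpsi n ^ 4 + sigma1 n ^ 4 ≥ 3 * n ^ 4 + 4 * n ^ 3 + 18 * n ^ 2 + 4 * n + 3 := by
  have hsum := two_mul_le_totient_add_dpsi n
  have hpsi := lt_dpsi (n := n) (by omega)
  have hsigma : n < sigma1 n := Nat.lt_sigma_one_apply hn
  have hpow := sub_one_pow_four_add_add_one_pow_four_le (a := n.totient) (b := dpsi n)
    (m := n) (by omega) (by positivity) (by omega) (by omega)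
  have hsigma4 : ((n : ℤ) + 1) ^ 4 ≤ (sigma1 n : ℤ) ^ 4 := by gcongr; omega
  zify
  linarith
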